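/- For every function f : Bool → Bool → Bool there exists a real quadratic polynomial g in four variables x, y, z, a (total degree at most 2) such that g is nonnegative on every binary assignment in {0,1}⁴ ⊆ ℝ⁴, and for all booleans b₁, b₂, b₃ encoded as reals x, y, z ∈ {0,1} via false ↦ 0, true ↦ 1: f(b₁)(b₂) = b₃ holds if and only if there exists an auxiliary value a ∈ {0,1} with g(x,y,z,a) = 0. That is, one auxiliary (ancilla) binary variable suffices to encode any two-input logic gate by a binary quadratic function. -/

import Mathlib

/-- Encoding of Booleans as real numbers: `false ↦ 0`, `true ↦ 1`. -/
def boolToReal (b : Bool) : ℝ := if b then 1 else 0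

/-!
With `x, y, a ∈ {0,1}`, the penalty `x y - 2 x a - 2 y a + 3 a` is `0` when `a = x y` and at
least `1` otherwise, so an ancilla forced to zero energy computes `x ∧ y`. Once `a = x y`, every
gate is the affine function `c₀₀ + (c₁₀ - c₀₀) x + (c₀₁ - c₀₀) y + (c₁₁ - c₁₀ - c₀₁ + c₀₀) a` of
its truth table `c`, so the square of `z` minus it, plus the penalty, is a quadratic energy that is
nonnegative on binary points and vanishes exactly when `a = x y` and `z` is the gate's output.
-/

open MvPolynomial

section Energy

variable {R S : Type*} [CommRing R] [CommRing S]

def andPenalty (x y a : R) : R := x * y - 2 * (x * a) - 2 * (y * a) + 3 * a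

def gateInterp (c : Bool → Bool → R) (x y a : R) : R :=
  c false false + (c true false - c false false) * x + (c false true - c false false) * y
    + (c true true - c true false - c false true + c false false) * a

def gateEnergy (c : Bool → Bool → R) (x y z a : R) : R :=
  (z - gateInterp c x y a) ^ 2 + andPenalty x y a

theorem map_gateEnergy (φ : R →+* S) (c : Bool → Bool → R) (x y z a : R) :
    φ (gateEnergy c x y z a) = gateEnergy (fun i j => φ (c i j)) (φ x) (φ y) (φ z) (φ a) := by
  simp [gateEnergy, gateInterp, andPenalty, map_ofNat]

theorem totalDegree_X_le {σ : Type*} (s : σ) : (X s : MvPolynomial σ R).totalDegree ≤ 1 :=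
  (totalDegree_monomial_le _ _).trans (by simp)

theorem totalDegree_gateEnergy_le {σ : Type*} (c : Bool → Bool → R) (i j k l : σ) :
    (gateEnergy (fun b₁ b₂ => C (c b₁ b₂)) (X i) (X j) (X k) (X l) :
      MvPolynomial σ R).totalDegree ≤ 2 := by
  simp only [gateEnergy, gateInterp, andPenalty, ← map_ofNat C]
  grind [totalDegree_add, totalDegree_sub, totalDegree_mul, totalDegree_pow, totalDegree_C,
    totalDegree_X_le]

end Energy

section Binary

variable {R : Type*} [CommRing R] [LinearOrder R] [IsStrictOrderedRing R] {x y a : R}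

theorem andPenalty_nonneg (hx : x = 0 ∨ x = 1) (hy : y = 0 ∨ y = 1) (ha : a = 0 ∨ a = 1) :
    0 ≤ andPenalty x y a := by
  rcases hx with rfl | rfl <;> rcases hy with rfl | rfl <;> rcases ha with rfl | rfl <;>
    norm_num [andPenalty]

theorem andPenalty_eq_zero_iff (hx : x = 0 ∨ x = 1) (hy : y = 0 ∨ y = 1) (ha : a = 0 ∨ a = 1) :
    andPenalty x y a = 0 ↔ a = x * y := by
  rcases hx with rfl | rfl <;> rcases hy with rfl | rfl <;> rcases ha with rfl | rfl <;>
    norm_num [andPenalty]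

theorem gateEnergy_nonneg (c : Bool → Bool → R) (z : R) (hx : x = 0 ∨ x = 1) (hy : y = 0 ∨ y = 1)
    (ha : a = 0 ∨ a = 1) : 0 ≤ gateEnergy c x y z a :=
  add_nonneg (sq_nonneg _) (andPenalty_nonneg hx hy ha)

theorem gateEnergy_eq_zero_iff (c : Bool → Bool → R) (z : R) (hx : x = 0 ∨ x = 1)
    (hy : y = 0 ∨ y = 1) (ha : a = 0 ∨ a = 1) :
    gateEnergy c x y z a = 0 ↔ a = x * y ∧ z = gateInterp c x y a := by
  rw [gateEnergy, add_eq_zero_iff_of_nonneg (sq_nonneg _) (andPenalty_nonneg hx hy ha),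
    andPenalty_eq_zero_iff hx hy ha, sq_eq_zero_iff, sub_eq_zero, and_comm]

end Binary

theorem boolToReal_eq_zero_or_eq_one (b : Bool) : boolToReal b = 0 ∨ boolToReal b = 1 := by
  cases b <;> simp [boolToReal]

theorem boolToReal_injective : Function.Injective boolToReal := by
  intro b₁ b₂; cases b₁ <;> cases b₂ <;> simp [boolToReal]

theorem boolToReal_and (b₁ b₂ : Bool) :
    boolToReal (b₁ && b₂) = boolToReal b₁ * boolToReal b₂ := by
  cases b₁ <;> cases b₂ <;> simp [boolToReal]

theorem gateInterp_boolToReal (c : Bool → Bool → ℝ) (b₁ b₂ : Bool) :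
    gateInterp c (boolToReal b₁) (boolToReal b₂) (boolToReal (b₁ && b₂)) = c b₁ b₂ := by
  cases b₁ <;> cases b₂ <;> simp [gateInterp, boolToReal]; ring

noncomputable def gatePoly (f : Bool → Bool → Bool) : MvPolynomial (Fin 4) ℝ :=
  gateEnergy (fun b₁ b₂ => C (boolToReal (f b₁ b₂))) (X 0) (X 1) (X 2) (X 3)

theorem eval_gatePoly (f : Bool → Bool → Bool) (v : Fin 4 → ℝ) :
    eval v (gatePoly f) =
      gateEnergy (fun b₁ b₂ => boolToReal (f b₁ b₂)) (v 0) (v 1) (v 2) (v 3) := by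
  simp [gatePoly, map_gateEnergy]

/-- For every two-input logic gate `f : Bool → Bool → Bool` there is a real
quadratic polynomial `g` in four variables `x, y, z, a` that is nonnegative on
every binary assignment in `{0,1}⁴`, such that `f b₁ b₂ = b₃` holds iff some
binary value of the ancilla `a` makes `g` vanish. -/
theorem two_input_gate_bq_with_ancilla (f : Bool → Bool → Bool) :
    ∃ g : MvPolynomial (Fin 4) ℝ, g.totalDegree ≤ 2 ∧
      (∀ v : Fin 4 → ℝ, (∀ i, v i = 0 ∨ v i = 1) → 0 ≤ MvPolynomial.eval v g) ∧
      (∀ b₁ b₂ b₃ : Bool,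
        (f b₁ b₂ = b₃ ↔
          ∃ a : ℝ, (a = 0 ∨ a = 1) ∧
            MvPolynomial.eval ![boolToReal b₁, boolToReal b₂, boolToReal b₃, a] g = 0)) := by
  refine ⟨gatePoly f, totalDegree_gateEnergy_le _ _ _ _ _, fun v hv => ?_, fun b₁ b₂ b₃ => ?_⟩
  · rw [eval_gatePoly]
    exact gateEnergy_nonneg _ _ (hv 0) (hv 1) (hv 3)
  have interp := gateInterp_boolToReal (fun b₁ b₂ => boolToReal (f b₁ b₂)) b₁ b₂
  have energy_eq_zero_iff {a : ℝ} (ha : a = 0 ∨ a = 1) :=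
    gateEnergy_eq_zero_iff (fun b₁ b₂ => boolToReal (f b₁ b₂)) (boolToReal b₃)
      (boolToReal_eq_zero_or_eq_one b₁) (boolToReal_eq_zero_or_eq_one b₂) ha
  simp only [eval_gatePoly, Matrix.cons_val]
  constructor
  · rintro rfl
    exact ⟨_, boolToReal_eq_zero_or_eq_one (b₁ && b₂),
      (energy_eq_zero_iff (boolToReal_eq_zero_or_eq_one _)).2 ⟨boolToReal_and b₁ b₂, interp.symm⟩⟩
  · rintro ⟨a, ha, h⟩
    obtain ⟨rfl, hz⟩ := (energy_eq_zero_iff ha).1 h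
    rw [← boolToReal_and, interp] at hz
    exact boolToReal_injective hz.symm
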